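/- Let S be a set with a distinguished point 0, let g: S → [0,+∞) vanish only at 0, and for each parameter ω in a metric space (P, d) let b_ω: S → ℝ and g_ω: S → [0,+∞) be families of functions with g_ω = g_{ω} vanishing only at 0. Suppose there exist constants C > 0 and α ∈ (0,1] such that for all ω, ω' ∈ P with δ := d(ω,ω') ≤ 1 and all x ∈ S: (i) b_{ω'}(x) ≥ b_ω(x) − C·δ^α·g_ω(x); (ii) e^{−Cδ}·g_ω(x) ≤ g_{ω'}(x) ≤ e^{Cδ}·g_ω(x). Define σ(ω) := inf_{x∈S, x≠0} b_ω(x)/g_ω(x), and assume σ is locally bounded on P. Then σ is locally Hölder continuous of exponent α on P: for ω, ω' in a fixed bounded set with d(ω,ω') ≤ 1, |σ(ω) − σ(ω')| ≤ C'·d(ω,ω')^α for some constant C' depending on the local bound of σ and on C. -/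

import Mathlib

/-!
Dividing (i) by `g ω' x` shows that the ratio at `ω'` is at least `t * (q - C δ^α)`, where `q` is
the ratio at `ω` and `t = g ω x / g ω' x ∈ [e^{-Cδ}, e^{Cδ}]` by (ii). As
`|t - 1| ≤ e^{Cδ} - 1 = O(δ)` and `δ ≤ δ^α`, every lower bound `m` of the ratios at `ω` gives the
lower bound `m - O((1 + |m|) δ^α)` at `ω'`. Taking `m = σ ω` and exchanging `ω, ω'` gives the
estimate. The same transfer shows that the two ratio sets are bounded below simultaneously; when
neither is, both infima are `0` by the `sInf` convention and there is nothing to prove.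
-/

open Real

lemma exp_sub_one_le_mul_exp (s : ℝ) : exp s - 1 ≤ s * exp s := by
  have h := mul_le_mul_of_nonneg_left (one_sub_le_exp_neg s) (exp_pos s).le
  rw [← exp_add, add_neg_cancel, exp_zero] at h
  linarith

lemma abs_sub_one_le_exp_sub_one {s t : ℝ} (hlo : exp (-s) ≤ t) (hhi : t ≤ exp s) :
    |t - 1| ≤ exp s - 1 := by
  have h := add_one_le_exp s
  have h' := add_one_le_exp (-s)
  rw [abs_le]
  constructor <;> nlinarith [exp_pos s, exp_neg s, mul_inv_cancel₀ (exp_pos s).ne']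

lemma sub_abs_mul_exp_sub_one_le_mul {s t : ℝ} (hlo : exp (-s) ≤ t) (hhi : t ≤ exp s) (y : ℝ) :
    y - |y| * (exp s - 1) ≤ t * y := by
  have h : |t - 1| * |y| ≤ (exp s - 1) * |y| :=
    mul_le_mul_of_nonneg_right (abs_sub_one_le_exp_sub_one hlo hhi) (abs_nonneg y)
  have h' := neg_abs_le ((t - 1) * y)
  rw [abs_mul] at h'
  linarith

def ratios {S : Type*} (b g : S → ℝ) (z0 : S) : Set ℝ := {r | ∃ x, x ≠ z0 ∧ r = b x / g x}

section

variable {S : Type*} {z0 : S} {b g b' g' : S → ℝ} {K s : ℝ}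

lemma sub_abs_mul_exp_sub_one_mem_lowerBounds_ratios
    (hpos : ∀ x, x ≠ z0 → 0 < g x) (hb : ∀ x, b x - K * g x ≤ b' x)
    (hg : ∀ x, exp (-s) * g x ≤ g' x ∧ g' x ≤ exp s * g x)
    {m : ℝ} (hm : m ∈ lowerBounds (ratios b g z0)) :
    (m - K) - |m - K| * (exp s - 1) ∈ lowerBounds (ratios b' g' z0) := by
  rintro _ ⟨x, hx, rfl⟩
  have hgx := hpos x hx
  have hgx' : 0 < g' x := lt_of_lt_of_le (by positivity) (hg x).1
  have ht_lo : exp (-s) ≤ g x / g' x := by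
    have h := mul_le_mul_of_nonneg_left (hg x).2 (exp_pos (-s)).le
    rw [← mul_assoc, ← exp_add, neg_add_cancel, exp_zero, one_mul] at h
    rwa [le_div_iff₀ hgx']
  have ht_hi : g x / g' x ≤ exp s := by
    have h := mul_le_mul_of_nonneg_left (hg x).1 (exp_pos s).le
    rw [← mul_assoc, ← exp_add, add_neg_cancel, exp_zero, one_mul] at h
    rw [div_le_iff₀ hgx']; linarith
  calc (m - K) - |m - K| * (exp s - 1)
      ≤ g x / g' x * (m - K) := sub_abs_mul_exp_sub_one_le_mul ht_lo ht_hi _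
    _ ≤ g x / g' x * (b x / g x - K) := by gcongr; exact hm ⟨x, hx, rfl⟩
    _ = (b x - K * g x) / g' x := by field_simp
    _ ≤ b' x / g' x := by gcongr; exact hb x

lemma sub_abs_mul_exp_sub_one_le_sInf_ratios (hne : ∃ x, x ≠ z0) (hpos : ∀ x, x ≠ z0 → 0 < g x)
    (hb : ∀ x, b x - K * g x ≤ b' x) (hg : ∀ x, exp (-s) * g x ≤ g' x ∧ g' x ≤ exp s * g x)
    (hbdd : BddBelow (ratios b g z0)) :
    (sInf (ratios b g z0) - K) - |sInf (ratios b g z0) - K| * (exp s - 1)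
      ≤ sInf (ratios b' g' z0) :=
  have ⟨x, hx⟩ := hne
  le_csInf ⟨_, x, hx, rfl⟩ <|
    sub_abs_mul_exp_sub_one_mem_lowerBounds_ratios hpos hb hg fun _ hr ↦ csInf_le hbdd hr

end

lemma sub_mul_rpow_le_sub_abs_mul_exp_sub_one {m B C α δ : ℝ} (hm : |m| ≤ B) (hC : 0 ≤ C)
    (hα : 0 ≤ α) (hα1 : α ≤ 1) (hδ : 0 ≤ δ) (hδ1 : δ ≤ 1) :
    m - (C + (B + C) * C * exp C) * δ ^ α
      ≤ (m - C * δ ^ α) - |m - C * δ ^ α| * (exp (C * δ) - 1) := by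
  have hδα : δ ≤ δ ^ α := self_le_rpow_of_le_one hδ hδ1 hα1
  have hδα1 : δ ^ α ≤ 1 := rpow_le_one hδ hδ1 hα
  have hδα0 : 0 ≤ δ ^ α := by positivity
  have habs : |m - C * δ ^ α| ≤ B + C := by
    calc |m - C * δ ^ α| ≤ |m| + |C * δ ^ α| := abs_sub _ _
      _ ≤ B + C := by
        rw [abs_of_nonneg (mul_nonneg hC hδα0)]
        linarith [mul_le_of_le_one_right hC hδα1]
  have hexp : exp (C * δ) - 1 ≤ C * exp C * δ ^ α := by
    calc exp (C * δ) - 1 ≤ C * δ * exp (C * δ) := exp_sub_one_le_mul_exp _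
      _ ≤ C * δ ^ α * exp C := by gcongr; nlinarith
      _ = C * exp C * δ ^ α := by ring
  have hexp0 : 0 ≤ exp (C * δ) - 1 := sub_nonneg.2 (one_le_exp (by positivity))
  nlinarith [mul_le_mul habs hexp hexp0 ((abs_nonneg _).trans habs)]

/-- Abstract Hölder continuity of a stability threshold σ(ω) = inf_{x≠0} b_ω(x)/g_ω(x). -/
theorem threshold_holder_continuous {S P : Type*} [MetricSpace P]
    (z0 : S) (hne : ∃ x : S, x ≠ z0)
    (b g : P → S → ℝ)
    (hgnn : ∀ ω x, 0 ≤ g ω x) (hg0 : ∀ ω x, g ω x = 0 ↔ x = z0)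
    (C α : ℝ) (hC : 0 < C) (hα : 0 < α) (hα1 : α ≤ 1)
    (h1 : ∀ ω ω' : P, dist ω ω' ≤ 1 → ∀ x : S,
      b ω x - C * (dist ω ω') ^ α * g ω x ≤ b ω' x)
    (h2 : ∀ ω ω' : P, dist ω ω' ≤ 1 → ∀ x : S,
      Real.exp (-(C * dist ω ω')) * g ω x ≤ g ω' x ∧
      g ω' x ≤ Real.exp (C * dist ω ω') * g ω x)
    (σ : P → ℝ)
    (hσ : ∀ ω, σ ω = sInf {r : ℝ | ∃ x : S, x ≠ z0 ∧ r = b ω x / g ω x})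
    (Q : Set P) (B : ℝ) (hB : ∀ ω ∈ Q, |σ ω| ≤ B) :
    ∃ C' : ℝ, 0 < C' ∧ ∀ ω ∈ Q, ∀ ω' ∈ Q, dist ω ω' ≤ 1 →
      |σ ω - σ ω'| ≤ C' * (dist ω ω') ^ α := by
  have hσ : ∀ ω, σ ω = sInf (ratios (b ω) (g ω) z0) := hσ
  have hpos : ∀ ω x, x ≠ z0 → 0 < g ω x := fun ω x hx ↦
    (hgnn ω x).lt_of_ne (Ne.symm (mt (hg0 ω x).1 hx))
  have one_sided : ∀ ω ∈ Q, ∀ ω', dist ω ω' ≤ 1 → BddBelow (ratios (b ω) (g ω) z0) →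
      σ ω - (C + (|B| + C) * C * exp C) * dist ω ω' ^ α ≤ σ ω' := fun ω hω ω' hd hbdd ↦ by
    rw [hσ, hσ]
    exact (sub_mul_rpow_le_sub_abs_mul_exp_sub_one
      ((hσ ω ▸ hB ω hω).trans (le_abs_self B)) hC.le hα.le hα1 dist_nonneg hd).trans
      (sub_abs_mul_exp_sub_one_le_sInf_ratios hne (hpos ω) (h1 ω ω' hd) (h2 ω ω' hd) hbdd)
  refine ⟨C + (|B| + C) * C * exp C, by positivity, fun ω hω ω' hω' hd ↦ ?_⟩
  have hd' : dist ω' ω ≤ 1 := dist_comm ω ω' ▸ hd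
  by_cases hbdd : BddBelow (ratios (b ω) (g ω) z0)
  · have hbdd' : BddBelow (ratios (b ω') (g ω') z0) :=
      have ⟨m, hm⟩ := hbdd
      ⟨_, sub_abs_mul_exp_sub_one_mem_lowerBounds_ratios (hpos ω) (h1 ω ω' hd) (h2 ω ω' hd) hm⟩
    have h := one_sided ω' hω' ω hd' hbdd'
    rw [dist_comm] at h
    rw [abs_sub_le_iff]
    constructor <;> linarith [one_sided ω hω ω' hd hbdd]
  · have hbdd' : ¬ BddBelow (ratios (b ω') (g ω') z0) := fun ⟨m, hm⟩ ↦ hbdd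
      ⟨_, sub_abs_mul_exp_sub_one_mem_lowerBounds_ratios (hpos ω') (h1 ω' ω hd') (h2 ω' ω hd') hm⟩
    rw [hσ, hσ, Real.sInf_of_not_bddBelow hbdd, Real.sInf_of_not_bddBelow hbdd', sub_zero,
      abs_zero]
    positivity
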